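/- arXiv:2012.09497 — 3 statements merged into one kernel-verified Lean document; each statement's English description precedes it below -/
import Mathlib

section
/- For p̄ = 1/(1+γ̄) with γ̄ > 0, the tail binomial sum ∑_{m=2}^{n} C(n,m) p̄^m (1−p̄)^{n−m} satisfies lim_{γ̄→∞} (−log of this sum)/log γ̄ = 2, for every fixed n ≥ 2. -/
/-!
With `p = 1/(1+γ)`, every term of the tail carries a factor `p²`; the cofactor is a polynomial in
`p` and `1 - p` whose value at `p = 0` is `C(n,2)`. Since `γ p → 1`, the tail times `γ²` tends to
`C(n,2) > 0`, and a function asymptotic to `c γ⁻²` with `c > 0` has `-log f / log γ → 2`.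
-/

open Real Filter Finset Topology

theorem Finset.sum_Icc_choose_mul_pow_eq_pow_mul {R : Type*} [CommSemiring R] (n k : ℕ) (p q : R) :
    ∑ m ∈ Icc k n, (n.choose m : R) * p ^ m * q ^ (n - m) =
      p ^ k * ∑ m ∈ Icc k n, (n.choose m : R) * p ^ (m - k) * q ^ (n - m) := by
  rw [mul_sum]
  refine sum_congr rfl fun m hm => ?_
  rw [← pow_mul_pow_sub p (mem_Icc.1 hm).1]
  ring

theorem tendsto_sum_Icc_choose_mul_pow_sub {R α : Type*} [CommSemiring R] [TopologicalSpace R]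
    [IsTopologicalSemiring R] {l : Filter α} {n k : ℕ} (hkn : k ≤ n) {p q : α → R}
    (hp : Tendsto p l (𝓝 0)) (hq : Tendsto q l (𝓝 1)) :
    Tendsto (fun x => ∑ m ∈ Icc k n, (n.choose m : R) * p x ^ (m - k) * q x ^ (n - m)) l
      (𝓝 (n.choose k)) := by
  have hterms := tendsto_finsetSum (Icc k n) fun m _ =>
    ((tendsto_const_nhds (x := (n.choose m : R))).mul (hp.pow (m - k))).mul (hq.pow (n - m))
  convert hterms using 2
  rw [sum_eq_single_of_mem k (mem_Icc.2 ⟨le_rfl, hkn⟩)]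
  · simp
  · intro m hm hmk
    simp [zero_pow (show m - k ≠ 0 by grind)]

theorem tendsto_neg_log_div_log_of_tendsto_mul_rpow {f : ℝ → ℝ} {k c : ℝ} (hc : 0 < c)
    (hf : Tendsto (fun x => f x * x ^ k) atTop (𝓝 c)) :
    Tendsto (fun x => -log (f x) / log x) atTop (𝓝 k) := by
  have hlog : Tendsto (fun x => log (f x * x ^ k) / log x) atTop (𝓝 0) :=
    ((continuousAt_log hc.ne').tendsto.comp hf).div_atTop tendsto_log_atTop
  have hdiff : Tendsto (fun x => k - log (f x * x ^ k) / log x) atTop (𝓝 k) := by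
    simpa using (tendsto_const_nhds (x := k)).sub hlog
  refine hdiff.congr' ?_
  filter_upwards [eventually_gt_atTop 1, hf.eventually (eventually_gt_nhds hc)] with x hx hfx
  have hx0 : 0 < x := one_pos.trans hx
  have hfx0 : f x ≠ 0 := by intro h; simp [h] at hfx
  rw [log_mul hfx0 (rpow_pos_of_pos hx0 k).ne', log_rpow hx0]
  field_simp [(log_pos hx).ne']
  ring

theorem two_or_more_errors_diversity (n : ℕ) (hn : 2 ≤ n) :
    Tendsto (fun γ : ℝ =>
        -Real.log (∑ m ∈ Finset.Icc 2 n,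
            (n.choose m : ℝ) * (1 / (1 + γ)) ^ m * (γ / (1 + γ)) ^ (n - m)) / Real.log γ)
      atTop (nhds 2) := by
  have hp : Tendsto (fun γ : ℝ => 1 / (1 + γ)) atTop (𝓝 0) :=
    tendsto_const_nhds.div_atTop (tendsto_atTop_add_const_left _ 1 tendsto_id)
  have hq : Tendsto (fun γ : ℝ => γ / (1 + γ)) atTop (𝓝 1) := by
    have hone_sub : Tendsto (fun γ : ℝ => 1 - 1 / (1 + γ)) atTop (𝓝 1) := by
      simpa using (tendsto_const_nhds (x := (1 : ℝ))).sub hp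
    refine hone_sub.congr' ?_
    filter_upwards [eventually_gt_atTop 0] with γ hγ
    field_simp
    ring
  have hscaled : Tendsto (fun γ : ℝ => (∑ m ∈ Icc 2 n,
      (n.choose m : ℝ) * (1 / (1 + γ)) ^ m * (γ / (1 + γ)) ^ (n - m)) * γ ^ (2 : ℝ))
      atTop (𝓝 (n.choose 2)) := by
    have h := (hq.pow 2).mul (tendsto_sum_Icc_choose_mul_pow_sub hn hp hq)
    rw [one_pow, one_mul] at h
    refine h.congr fun γ => ?_
    rw [sum_Icc_choose_mul_pow_eq_pow_mul, rpow_two]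
    ring
  exact tendsto_neg_log_div_log_of_tendsto_mul_rpow (mod_cast Nat.choose_pos hn) hscaled
end

section
/- For fixed n ≥ 2, the quantity B(γ̄) = (n−1)·p̄_2(γ̄)·(1−p̄_n(γ̄))^{n−1}, with p̄_2(γ̄) = n(n−1)/[(γ̄+n−1)(γ̄+n)] and p̄_n(γ̄) = ∑_{k=0}^{n−1} n C(n−1,k)(−1)^k/(γ̄+k+1), satisfies lim_{γ̄→∞} (−log B(γ̄))/log γ̄ = 2. -/
open Real Filter Finset

theorem single_misplaced_error_diversity (n : ℕ) (hn : 2 ≤ n) :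
    Tendsto (fun γ : ℝ =>
        -Real.log ((n - 1 : ℝ)
            * ((n : ℝ) * (n - 1) / ((γ + n - 1) * (γ + n)))
            * (1 - ∑ k ∈ Finset.range n, (n : ℝ) * (n - 1).choose k * (-1) ^ k / (γ + k + 1))
                ^ (n - 1)) / Real.log γ)
      atTop (nhds 2) := by
  have hn2 : (2:ℝ) ≤ (n:ℝ) := by exact_mod_cast hn
  set S : ℝ → ℝ := fun γ =>
    ∑ k ∈ Finset.range n, (n : ℝ) * (n - 1).choose k * (-1) ^ k / (γ + k + 1) with hSdef
  -- the sum tends to 0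
  have hS : Tendsto S atTop (nhds 0) := by
    have h0 : (0:ℝ) = ∑ k ∈ Finset.range n, (0:ℝ) := by simp
    rw [h0]
    refine tendsto_finset_sum _ (fun k _ => ?_)
    have h1 : Tendsto (fun γ : ℝ => γ + (k:ℝ) + 1) atTop atTop :=
      tendsto_atTop_add_const_right _ _ (tendsto_atTop_add_const_right _ _ tendsto_id)
    have := (tendsto_inv_atTop_zero.comp h1).const_mul ((n : ℝ) * (n - 1).choose k * (-1) ^ k)
    simpa [div_eq_mul_inv, Function.comp] using this
  -- constants over log γ tend to 0
  have hc : ∀ c : ℝ, Tendsto (fun γ : ℝ => c / Real.log γ) atTop (nhds 0) := by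
    intro c
    have := (tendsto_inv_atTop_zero.comp Real.tendsto_log_atTop).const_mul c
    simpa [div_eq_mul_inv, Function.comp] using this
  -- log(γ+c)/log γ tends to 1
  have hlog : ∀ c : ℝ, Tendsto (fun γ : ℝ => Real.log (γ + c) / Real.log γ) atTop (nhds 1) := by
    intro c
    have hev : ∀ᶠ γ : ℝ in atTop,
        Real.log (γ + c) / Real.log γ = 1 + Real.log (1 + c / γ) / Real.log γ := by
      filter_upwards [eventually_gt_atTop (max 1 (2 * |c|))] with γ hγ
      have hγ1 : (1:ℝ) < γ := lt_of_le_of_lt (le_max_left _ _) hγ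
      have hγc : (2:ℝ) * |c| < γ := lt_of_le_of_lt (le_max_right _ _) hγ
      have hγ0 : (0:ℝ) < γ := lt_trans one_pos hγ1
      have hcγ : (0:ℝ) < 1 + c / γ := by
        have : |c / γ| < 1 := by
          rw [abs_div, abs_of_pos hγ0, div_lt_one hγ0]
          nlinarith [abs_nonneg c]
        nlinarith [neg_abs_le (c / γ)]
      have h1 : γ + c = γ * (1 + c / γ) := by field_simp
      have hlγ : Real.log γ ≠ 0 := ne_of_gt (Real.log_pos hγ1)
      rw [h1, Real.log_mul (ne_of_gt hγ0) (ne_of_gt hcγ), add_div, div_self hlγ]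
    have hlim : Tendsto (fun γ : ℝ => 1 + Real.log (1 + c / γ) / Real.log γ) atTop
        (nhds 1) := by
      have h1 : Tendsto (fun γ : ℝ => 1 + c / γ) atTop (nhds 1) := by
        have h0 : Tendsto (fun γ : ℝ => γ⁻¹) atTop (nhds 0) := tendsto_inv_atTop_zero
        have := h0.const_mul c
        simpa [div_eq_mul_inv] using (tendsto_const_nhds (x := (1:ℝ))).add this
      have h2 : Tendsto (fun γ : ℝ => Real.log (1 + c / γ)) atTop (nhds 0) := by
        have := (Real.continuousAt_log (by norm_num : (1:ℝ) ≠ 0)).tendsto.comp h1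
        simpa [Function.comp_def] using this
      have h3 : Tendsto (fun γ : ℝ => Real.log (1 + c / γ) / Real.log γ) atTop (nhds 0) := by
        have := h2.mul (tendsto_inv_atTop_zero.comp Real.tendsto_log_atTop)
        simpa [div_eq_mul_inv, Function.comp] using this
      simpa using (tendsto_const_nhds (x := (1:ℝ))).add h3
    exact hlim.congr' (hev.mono fun γ h => h.symm)
  -- the log(1-S)/log γ term tends to 0
  have hSlog : Tendsto (fun γ : ℝ => (((n:ℝ) - 1) * Real.log (1 - S γ)) / Real.log γ)
      atTop (nhds 0) := by
    have h1 : Tendsto (fun γ : ℝ => 1 - S γ) atTop (nhds 1) := by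
      simpa using (tendsto_const_nhds (x := (1:ℝ))).sub hS
    have h2 : Tendsto (fun γ : ℝ => Real.log (1 - S γ)) atTop (nhds 0) := by
      have := (Real.continuousAt_log (by norm_num : (1:ℝ) ≠ 0)).tendsto.comp h1
      simpa [Function.comp_def] using this
    have h3 := (h2.const_mul ((n:ℝ) - 1)).mul
      (tendsto_inv_atTop_zero.comp Real.tendsto_log_atTop)
    simpa [div_eq_mul_inv, Function.comp, mul_assoc] using h3
  -- the limit of the decomposed expression
  have Hg : Tendsto (fun γ : ℝ =>
      (-(Real.log ((n:ℝ) - 1)) - Real.log ((n:ℝ) * ((n:ℝ) - 1))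
        + Real.log (γ + ((n:ℝ) - 1)) + Real.log (γ + (n:ℝ))
        - ((n:ℝ) - 1) * Real.log (1 - S γ)) / Real.log γ) atTop (nhds 2) := by
    have H := (((hc (-(Real.log ((n:ℝ) - 1)) - Real.log ((n:ℝ) * ((n:ℝ) - 1)))).add
      (hlog ((n:ℝ) - 1))).add (hlog (n:ℝ))).sub hSlog
    have heq : (fun γ : ℝ =>
        (-(Real.log ((n:ℝ) - 1)) - Real.log ((n:ℝ) * ((n:ℝ) - 1))
          + Real.log (γ + ((n:ℝ) - 1)) + Real.log (γ + (n:ℝ))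
          - ((n:ℝ) - 1) * Real.log (1 - S γ)) / Real.log γ)
        = (fun γ : ℝ =>
        (-(Real.log ((n:ℝ) - 1)) - Real.log ((n:ℝ) * ((n:ℝ) - 1))) / Real.log γ
          + Real.log (γ + ((n:ℝ) - 1)) / Real.log γ + Real.log (γ + (n:ℝ)) / Real.log γ
          - (((n:ℝ) - 1) * Real.log (1 - S γ)) / Real.log γ) := by
      funext γ
      simp only [div_eq_mul_inv]
      ring
    rw [heq]
    have : (0:ℝ) + 1 + 1 - 0 = 2 := by norm_num
    rwa [this] at H
  -- eventual equality
  have hev : (fun γ : ℝ =>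
      -Real.log ((n - 1 : ℝ)
          * ((n : ℝ) * (n - 1) / ((γ + n - 1) * (γ + n)))
          * (1 - ∑ k ∈ Finset.range n, (n : ℝ) * (n - 1).choose k * (-1) ^ k / (γ + k + 1))
              ^ (n - 1)) / Real.log γ)
      =ᶠ[atTop] (fun γ : ℝ =>
      (-(Real.log ((n:ℝ) - 1)) - Real.log ((n:ℝ) * ((n:ℝ) - 1))
        + Real.log (γ + ((n:ℝ) - 1)) + Real.log (γ + (n:ℝ))
        - ((n:ℝ) - 1) * Real.log (1 - S γ)) / Real.log γ) := by
    have hS1 : ∀ᶠ γ : ℝ in atTop, S γ < 1 :=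
      hS.eventually_lt_const (by norm_num : (0:ℝ) < 1)
    filter_upwards [eventually_gt_atTop (1:ℝ), hS1] with γ hγ hSγ
    have hγ0 : (0:ℝ) < γ := lt_trans one_pos hγ
    have hA : ((n:ℝ) - 1) ≠ 0 := by nlinarith
    have hB : ((n:ℝ) * ((n:ℝ) - 1)) ≠ 0 := by nlinarith
    have hd1 : γ + (n:ℝ) - 1 > 0 := by nlinarith
    have hd2 : γ + (n:ℝ) > 0 := by nlinarith
    have hden : ((γ + (n:ℝ) - 1) * (γ + (n:ℝ))) ≠ 0 := by positivity
    have hQ0 : (0:ℝ) < 1 - S γ := by linarith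
    have hP2 : ((n:ℝ) * ((n:ℝ) - 1) / ((γ + (n:ℝ) - 1) * (γ + (n:ℝ)))) ≠ 0 :=
      div_ne_zero hB hden
    have hQ : (1 - S γ) ^ (n - 1) ≠ 0 := pow_ne_zero _ (ne_of_gt hQ0)
    have hcast : ((n - 1 : ℕ) : ℝ) = (n:ℝ) - 1 := by
      have : 1 ≤ n := le_trans (by norm_num) hn
      push_cast [Nat.cast_sub this]
      ring
    have hfold : (∑ k ∈ Finset.range n, (n:ℝ) * (n - 1).choose k * (-1) ^ k / (γ + k + 1)) = S γ := rfl
    rw [hfold]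
    rw [Real.log_mul (mul_ne_zero hA hP2) hQ, Real.log_mul hA hP2,
      Real.log_div hB hden, Real.log_mul (ne_of_gt hd1) (ne_of_gt hd2),
      Real.log_pow, hcast]
    have h1 : γ + (n:ℝ) - 1 = γ + ((n:ℝ) - 1) := by ring
    rw [h1]
    ring_nf
  exact Hg.congr' hev.symm
end

section
/- For fixed n ≥ 2, the flip-decoder error bound P(γ̄) = (n−1)·p̄_2(γ̄)·(1−p̄_n(γ̄))^{n−1} + ∑_{m=2}^{n} C(n,m)(1/(1+γ̄))^m (γ̄/(1+γ̄))^{n−m}, with p̄_2(γ̄) = n(n−1)/[(γ̄+n−1)(γ̄+n)] and p̄_n(γ̄) = ∑_{k=0}^{n−1} n C(n−1,k)(−1)^k/(γ̄+k+1), satisfies lim_{γ̄→∞} (−log P(γ̄))/log γ̄ = 2. -/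
/-!
Both terms of the bound decay like `γ̄⁻²`: `p̄₂(γ̄) γ̄² → n(n-1)` while `p̄ₙ(γ̄) → 0`, and in the
binomial tail only the `m = 2` term survives after multiplying by `γ̄²`. Hence `P(γ̄) γ̄² → L > 0`,
so `log P(γ̄) = -2 log γ̄ + O(1)`.
-/

open Real Filter Finset

noncomputable def pBarTwo (n : ℕ) (γ : ℝ) : ℝ :=
  (n : ℝ) * (n - 1) / ((γ + n - 1) * (γ + n))

noncomputable def pBarN (n : ℕ) (γ : ℝ) : ℝ :=
  ∑ k ∈ Finset.range n, (n : ℝ) * (n - 1).choose k * (-1) ^ k / (γ + k + 1)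

/-- `P(X ≥ d)` for `X ~ Binomial(n, 1 / (1 + γ))`. -/
noncomputable def binomialUpperTail (n d : ℕ) (γ : ℝ) : ℝ :=
  ∑ m ∈ Finset.Icc d n, (n.choose m : ℝ) * (1 / (1 + γ)) ^ m * (γ / (1 + γ)) ^ (n - m)

lemma tendsto_neg_log_div_log_of_tendsto_mul_pow {P : ℝ → ℝ} {L : ℝ} (d : ℕ) (hL : 0 < L)
    (hP : Tendsto (fun γ => P γ * γ ^ d) atTop (nhds L)) :
    Tendsto (fun γ => -Real.log (P γ) / Real.log γ) atTop (nhds d) := by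
  have hratio : Tendsto (fun γ => Real.log (P γ * γ ^ d) / Real.log γ) atTop (nhds 0) :=
    ((continuousAt_log hL.ne').tendsto.comp hP).div_atTop tendsto_log_atTop
  refine Tendsto.congr' ?_ (by simpa using tendsto_const_nhds (x := (d : ℝ)) |>.sub hratio)
  filter_upwards [hP.eventually (eventually_gt_nhds hL), eventually_gt_atTop 1]
    with γ hPγ hγ
  have hγ0 : 0 < γ := by linarith
  have hPpos : 0 < P γ := pos_of_mul_pos_left hPγ (by positivity)
  have hlogγ : 0 < Real.log γ := log_pos hγ
  rw [log_mul hPpos.ne' (by positivity), log_pow]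
  field_simp
  ring

lemma tendsto_const_div_add_atTop (c a : ℝ) :
    Tendsto (fun γ : ℝ => c / (γ + a)) atTop (nhds 0) :=
  tendsto_const_nhds.div_atTop (tendsto_atTop_add_const_right _ a tendsto_id)

lemma tendsto_div_add_atTop (a : ℝ) :
    Tendsto (fun γ : ℝ => γ / (γ + a)) atTop (nhds 1) := by
  have h : Tendsto (fun γ : ℝ => (1 + a / γ)⁻¹) atTop (nhds 1) := by
    simpa using ((tendsto_const_nhds (x := a)).div_atTop tendsto_id).const_add 1 |>.inv₀
      (by norm_num)
  refine h.congr' ?_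
  filter_upwards [eventually_gt_atTop 0] with γ hγ
  rw [one_add_div hγ.ne', inv_div]

lemma tendsto_pBarTwo_mul_sq (n : ℕ) :
    Tendsto (fun γ => pBarTwo n γ * γ ^ 2) atTop (nhds ((n : ℝ) * (n - 1))) := by
  have h := ((tendsto_div_add_atTop ((n : ℝ) - 1)).mul (tendsto_div_add_atTop (n : ℝ))).const_mul
    ((n : ℝ) * (n - 1))
  rw [mul_one, mul_one] at h
  refine h.congr fun γ => ?_
  simp only [pBarTwo, div_eq_mul_inv, mul_inv, ← add_sub_assoc]
  ring

lemma tendsto_pBarN (n : ℕ) : Tendsto (pBarN n) atTop (nhds 0) := by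
  unfold pBarN
  simpa only [add_assoc, sum_const_zero] using tendsto_finsetSum (range n) fun k _ =>
    tendsto_const_div_add_atTop ((n : ℝ) * (n - 1).choose k * (-1) ^ k) ((k : ℝ) + 1)

lemma tendsto_binomialUpperTail_mul_pow {n d : ℕ} (hd : d ≤ n) :
    Tendsto (fun γ => binomialUpperTail n d γ * γ ^ d) atTop (nhds (n.choose d : ℝ)) := by
  have hq : Tendsto (fun γ : ℝ => 1 / (1 + γ)) atTop (nhds 0) := by
    simpa [add_comm] using tendsto_const_div_add_atTop 1 1
  have hp : Tendsto (fun γ : ℝ => γ / (1 + γ)) atTop (nhds 1) := by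
    simpa [add_comm] using tendsto_div_add_atTop 1
  have hterm : ∀ m ∈ Icc d n, Tendsto (fun γ : ℝ =>
      (n.choose m : ℝ) * ((γ / (1 + γ)) ^ d * ((1 / (1 + γ)) ^ (m - d) * (γ / (1 + γ)) ^ (n - m))))
      atTop (nhds ((n.choose m : ℝ) * 0 ^ (m - d))) := fun m _ => by
    simpa using ((hp.pow d).mul ((hq.pow (m - d)).mul (hp.pow (n - m)))).const_mul _
  have hlimit : ∑ m ∈ Icc d n, (n.choose m : ℝ) * 0 ^ (m - d) = n.choose d := by
    rw [sum_eq_single_of_mem d (mem_Icc.mpr ⟨le_rfl, hd⟩)]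
    · simp
    · intro m hm hmd
      have : m - d ≠ 0 := by rw [mem_Icc] at hm; omega
      simp [zero_pow this]
  rw [← hlimit]
  refine (tendsto_finsetSum _ hterm).congr' ?_
  filter_upwards [eventually_gt_atTop 0] with γ hγ
  rw [binomialUpperTail, sum_mul]
  refine sum_congr rfl fun m hm => ?_
  obtain ⟨k, rfl⟩ : ∃ k, m = d + k := ⟨m - d, by rw [mem_Icc] at hm; omega⟩
  rw [Nat.add_sub_cancel_left, pow_add]
  simp only [div_pow, one_pow]
  field_simp

theorem flip_decoder_diversity (n : ℕ) (hn : 2 ≤ n) :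
    Tendsto (fun γ : ℝ =>
        -Real.log ((n - 1 : ℝ)
              * ((n : ℝ) * (n - 1) / ((γ + n - 1) * (γ + n)))
              * (1 - ∑ k ∈ Finset.range n, (n : ℝ) * (n - 1).choose k * (-1) ^ k / (γ + k + 1))
                  ^ (n - 1)
            + ∑ m ∈ Finset.Icc 2 n,
                (n.choose m : ℝ) * (1 / (1 + γ)) ^ m * (γ / (1 + γ)) ^ (n - m)) / Real.log γ)
      atTop (nhds 2) := by
  have hpos : 0 < ((n : ℝ) - 1) * ((n * (n - 1)) * (1 - 0) ^ (n - 1)) + n.choose 2 := by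
    have hn1 : (0 : ℝ) ≤ n - 1 := by
      rw [sub_nonneg, Nat.one_le_cast]
      omega
    have hchoose : (0 : ℝ) < n.choose 2 := by exact_mod_cast Nat.choose_pos hn
    rw [sub_zero, one_pow, mul_one]
    exact add_pos_of_nonneg_of_pos (mul_nonneg hn1 (mul_nonneg n.cast_nonneg hn1)) hchoose
  have hlim := ((tendsto_pBarTwo_mul_sq n).mul
      (((tendsto_pBarN n).const_sub 1).pow (n - 1))).const_mul ((n : ℝ) - 1) |>.add
    (tendsto_binomialUpperTail_mul_pow hn)
  have hdiversity := tendsto_neg_log_div_log_of_tendsto_mul_pow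
    (P := fun γ => (n - 1 : ℝ) * pBarTwo n γ * (1 - pBarN n γ) ^ (n - 1)
      + binomialUpperTail n 2 γ) 2 hpos (hlim.congr fun γ => by ring)
  rw [Nat.cast_ofNat] at hdiversity
  exact hdiversity
end
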